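/- Operator norm inequality (equation (eq.variance.eq2) in the proof of Lemma 3, abstract form). Let H₁ and H₂ be Hilbert spaces, let S : H₁ → H₂ be a bounded linear operator with C = S*S, let Ĉ be a bounded positive self-adjoint operator on H₁, and let λ > 0. Then ‖S (Ĉ + λI)^{−1} (C + λI)^{1/2}‖ ≤ ‖(C + λI)^{1/2} (Ĉ + λI)^{−1/2}‖². -/

import Mathlib

/-! Write `R = (C + λ)^{1/2}` and `B = (Ĉ + λ)^{-1/2}`, so that `B² = (Ĉ + λ)⁻¹`.
Since `S*S = C ≤ R*R`, we have `‖S y‖ ≤ ‖R y‖` pointwise, hence the left-hand side is at most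
`‖R B² R‖ = ‖(RB)(RB)*‖ = ‖RB‖²` by the C*-identity. -/

open ContinuousLinearMap
open scoped ComplexOrder

section CStarAlgebra

variable {A : Type*} [CStarAlgebra A]

lemma norm_mul_mul_self_mul_eq_sq {a b : A} (ha : IsSelfAdjoint a) (hb : IsSelfAdjoint b) :
    ‖a * (b * b) * a‖ = ‖a * b‖ ^ 2 := by
  have : a * (b * b) * a = a * b * star (a * b) := by
    rw [star_mul, ha.star_eq, hb.star_eq]; noncomm_ring
  rw [this, CStarRing.norm_self_mul_star, sq]

variable [PartialOrder A] [StarOrderedRing A]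

lemma cfc_sqrt_mul_cfc_sqrt {a : A} (ha : 0 ≤ a) :
    cfc (fun x : ℝ => √x) a * cfc (fun x : ℝ => √x) a = a :=
  calc _ = cfc (fun x : ℝ => √x * √x) a := (cfc_mul _ _ a).symm
    _ = cfc (fun x : ℝ => x) a :=
        cfc_congr fun x hx => Real.mul_self_sqrt (spectrum_nonneg_of_nonneg ha hx)
    _ = a := cfc_id' ℝ a

lemma cfc_inv_sqrt_mul_cfc_inv_sqrt_mul_self {a : A} (ha : IsStrictlyPositive a) :
    cfc (fun x : ℝ => (√x)⁻¹) a * cfc (fun x : ℝ => (√x)⁻¹) a * a = 1 := by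
  have hcont : ContinuousOn (fun x : ℝ => (√x)⁻¹) (spectrum ℝ a) :=
    Real.continuous_sqrt.continuousOn.inv₀ fun x hx => (Real.sqrt_pos.2 (ha.spectrum_pos hx)).ne'
  calc _ = cfc (fun x : ℝ => (√x)⁻¹ * (√x)⁻¹) a * cfc (fun x : ℝ => x) a := by
        rw [← cfc_mul _ _ a, cfc_id' ℝ a]
    _ = cfc (fun x : ℝ => (√x)⁻¹ * (√x)⁻¹ * x) a := (cfc_mul _ _ a).symm
    _ = cfc (fun _ : ℝ => (1 : ℝ)) a := by
        refine cfc_congr fun x hx => ?_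
        have hx := ha.spectrum_pos hx
        rw [← mul_inv, Real.mul_self_sqrt hx.le, inv_mul_cancel₀ hx.ne']
    _ = 1 := cfc_const_one ℝ a

end CStarAlgebra

section HilbertSpace

variable {𝕜 D E F G : Type*} [RCLike 𝕜] [NormedAddCommGroup D] [NormedSpace 𝕜 D]
  [NormedAddCommGroup E] [InnerProductSpace 𝕜 E] [CompleteSpace E]
  [NormedAddCommGroup F] [InnerProductSpace 𝕜 F] [CompleteSpace F]
  [NormedAddCommGroup G] [InnerProductSpace 𝕜 G] [CompleteSpace G]

lemma norm_apply_le_of_adjoint_comp_self_le {S : E →L[𝕜] F} {T : E →L[𝕜] G}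
    (h : adjoint S ∘L S ≤ adjoint T ∘L T) (x : E) : ‖S x‖ ≤ ‖T x‖ := by
  have hx := ((le_def _ _).1 h).re_inner_nonneg_left x
  rw [sub_apply, inner_sub_left, map_sub, sub_nonneg, ← apply_norm_sq_eq_inner_adjoint_left,
    ← apply_norm_sq_eq_inner_adjoint_left] at hx
  exact (sq_le_sq₀ (norm_nonneg _) (norm_nonneg _)).1 hx

lemma opNorm_comp_le_of_adjoint_comp_self_le {S : E →L[𝕜] F} {T : E →L[𝕜] G}
    (h : adjoint S ∘L S ≤ adjoint T ∘L T) (X : D →L[𝕜] E) : ‖S ∘L X‖ ≤ ‖T ∘L X‖ :=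
  opNorm_le_bound _ (norm_nonneg _) fun x =>
    (norm_apply_le_of_adjoint_comp_self_le h (X x)).trans ((T ∘L X).le_opNorm x)

end HilbertSpace

/-- **Operator norm inequality** (equation (eq.variance.eq2) in the proof of Lemma 3,
abstract form).  Let `S : H₁ → H₂` be a bounded linear operator, `C = S*S`, let `Ĉ` be a
bounded positive self-adjoint operator on `H₁` and `λ > 0`.  Square roots are given by
the continuous functional calculus and `Chatinv` denotes the (two-sided) inverse of
`Ĉ + λI`.  Then `‖S (Ĉ + λI)⁻¹ (C + λI)^{1/2}‖ ≤ ‖(C + λI)^{1/2} (Ĉ + λI)^{-1/2}‖²`. -/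
theorem statement14
    {H₁ : Type*} [NormedAddCommGroup H₁] [InnerProductSpace ℂ H₁] [CompleteSpace H₁]
    {H₂ : Type*} [NormedAddCommGroup H₂] [InnerProductSpace ℂ H₂] [CompleteSpace H₂]
    (S : H₁ →L[ℂ] H₂)
    (C : H₁ →L[ℂ] H₁) (hC : C = (ContinuousLinearMap.adjoint S).comp S)
    (Chat : H₁ →L[ℂ] H₁)
    (hChatsa : IsSelfAdjoint Chat)
    (hChatpos : ∀ h : H₁, (0:ℝ) ≤ RCLike.re (inner ℂ (Chat h) h : ℂ))
    (lam : ℝ) (hlam : 0 < lam)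
    (Chatinv : H₁ →L[ℂ] H₁)
    (hChatinv₁ : Chatinv * (Chat + (lam : ℂ) • (1 : H₁ →L[ℂ] H₁)) = 1)
    (hChatinv₂ : (Chat + (lam : ℂ) • (1 : H₁ →L[ℂ] H₁)) * Chatinv = 1) :
    ‖S.comp (Chatinv * cfc (fun x : ℝ => Real.sqrt x) (C + (lam : ℂ) • (1 : H₁ →L[ℂ] H₁)))‖
      ≤ ‖cfc (fun x : ℝ => Real.sqrt x) (C + (lam : ℂ) • (1 : H₁ →L[ℂ] H₁))
          * cfc (fun x : ℝ => (Real.sqrt x)⁻¹) (Chat + (lam : ℂ) • (1 : H₁ →L[ℂ] H₁))‖ ^ 2 := by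
  set P := C + (lam : ℂ) • (1 : H₁ →L[ℂ] H₁)
  set Q := Chat + (lam : ℂ) • (1 : H₁ →L[ℂ] H₁)
  set R := cfc (fun x : ℝ => √x) P
  set B := cfc (fun x : ℝ => (√x)⁻¹) Q
  have hlam_one : 0 ≤ (lam : ℂ) • (1 : H₁ →L[ℂ] H₁) := by
    rw [nonneg_iff_isPositive]
    exact isPositive_one.smul_of_nonneg (by exact_mod_cast hlam.le)
  have hC_le : C ≤ P := le_add_of_nonneg_right hlam_one
  have hC0 : 0 ≤ C := by
    rw [hC, nonneg_iff_isPositive]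
    exact isPositive_adjoint_comp_self S
  have hQ : IsStrictlyPositive Q := by
    refine IsUnit.isStrictlyPositive ⟨⟨Q, Chatinv, hChatinv₂, hChatinv₁⟩, rfl⟩ ?_
    have hChat : 0 ≤ Chat := (nonneg_iff_isPositive _).2 (isPositive_def'.2 ⟨hChatsa, hChatpos⟩)
    exact add_nonneg hChat hlam_one
  have hRR : adjoint R ∘L R = P := by
    rw [← star_eq_adjoint, (cfc_predicate _ P : IsSelfAdjoint R).star_eq]
    exact cfc_sqrt_mul_cfc_sqrt (hC0.trans hC_le)
  have hBB : B * B = Chatinv :=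
    left_inv_eq_right_inv (cfc_inv_sqrt_mul_cfc_inv_sqrt_mul_self hQ) hChatinv₂
  calc ‖S ∘L (Chatinv * R)‖ ≤ ‖R ∘L (Chatinv * R)‖ :=
        opNorm_comp_le_of_adjoint_comp_self_le (by rwa [hRR, ← hC]) _
    _ = ‖R * (B * B) * R‖ := by rw [hBB, mul_assoc]; rfl
    _ = ‖R * B‖ ^ 2 := norm_mul_mul_self_mul_eq_sq (cfc_predicate _ P) (cfc_predicate _ Q)
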